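/- Let Y be a real normed space, A : ℓ² → Y bounded linear, q ≥ 1, and 1 < τ₁ ≤ τ₂. Let y ∈ Y, and suppose there exists a solution x ∈ ℓ² of Ax = y with ‖x‖₁ < ∞. Let δₙ > 0 with δₙ → 0, yₙ ∈ Y with ‖y − yₙ‖_Y ≤ δₙ, αₙ > 0, ηₙ ∈ [0,1] with ηₙ → η ∈ [0,1), βₙ = ηₙαₙ, and let xₙ be a minimizer over ℓ² of x ↦ (1/q)‖Ax − yₙ‖_Y^q + αₙ‖x‖₁ − βₙ‖x‖₂, satisfying the discrepancy principle τ₁δₙ ≤ ‖Axₙ − yₙ‖_Y ≤ τ₂δₙ for every n. Then (xₙ) has a subsequence converging in ℓ²-norm to some x* with Ax* = y and ‖x*‖₁ − η‖x*‖₂ = min{‖x‖₁ − η‖x‖₂ : x ∈ ℓ², Ax = y} (an R_η-minimum solution). If moreover the R_η-minimum solution x† is unique, then ‖xₙ − x†‖₂ → 0 for the whole sequence. -/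

import Mathlib

open scoped ENNReal NNReal
open Filter

noncomputable section

/-- `ℓ²(ℕ)`, the real Hilbert space of square-summable sequences. -/
abbrev L2 : Type := lp (fun _ : ℕ => ℝ) 2

/-- The (possibly infinite) `ℓ¹`-norm of an element of `ℓ²`. -/
def l1norm (x : L2) : ℝ≥0∞ := ∑' i, (‖x i‖₊ : ℝ≥0∞)

/-- The penalty `R_η(x) = ‖x‖₁ − η‖x‖₂`, valued in `[0,∞]`. -/
def Reta (η : ℝ) (x : L2) : ℝ≥0∞ := l1norm x - ENNReal.ofReal (η * ‖x‖)

lemma l1_summable {x : L2} (h : l1norm x ≠ ⊤) : Summable fun i => ‖x i‖ := by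
  have h2 := ENNReal.tsum_coe_ne_top_iff_summable.mp h
  simpa using NNReal.summable_coe.mpr h2

lemma l1norm_eq {x : L2} (h : Summable fun i => ‖x i‖) :
    l1norm x = ENNReal.ofReal (∑' i, ‖x i‖) := by
  have h2 : Summable fun i => ‖x i‖₊ := by
    rw [← NNReal.summable_coe]; simpa using h
  rw [l1norm, ← ENNReal.coe_tsum h2, ← ENNReal.ofReal_coe_nnreal]
  congr 1
  rw [NNReal.coe_tsum]
  simp

lemma l1norm_ne_top {x : L2} (h : Summable fun i => ‖x i‖) : l1norm x ≠ ⊤ := by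
  rw [l1norm_eq h]; exact ENNReal.ofReal_ne_top

lemma l1norm_toReal {x : L2} (h : Summable fun i => ‖x i‖) :
    (l1norm x).toReal = ∑' i, ‖x i‖ := by
  rw [l1norm_eq h, ENNReal.toReal_ofReal (tsum_nonneg fun i => norm_nonneg _)]

lemma coord_le_norm (x : L2) (i : ℕ) : ‖x i‖ ≤ ‖x‖ :=
  lp.norm_apply_le_norm two_ne_zero x i

lemma norm_le_tsum (x : L2) (h : Summable fun i => ‖x i‖) : ‖x‖ ≤ ∑' i, ‖x i‖ := by
  set S := ∑' i, ‖x i‖ with hS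
  have hSnn : 0 ≤ S := tsum_nonneg fun i => norm_nonneg _
  have hpt : ∀ i, ‖x i‖ ^ (2:ℝ) ≤ ‖x i‖ * S := by
    intro i
    have h1 : ‖x i‖ ≤ S := Summable.le_tsum h i fun j _ => norm_nonneg _
    have h2 : ‖x i‖ ^ (2:ℝ) = ‖x i‖ * ‖x i‖ := by
      rw [show (2:ℝ) = ((2:ℕ):ℝ) by norm_num, Real.rpow_natCast]; ring
    rw [h2]
    exact mul_le_mul_of_nonneg_left h1 (norm_nonneg _)
  have hnorm : ‖x‖ ^ (2:ℝ) = ∑' i, ‖x i‖ ^ (2:ℝ) := by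
    have := lp.norm_rpow_eq_tsum (p := 2) (by norm_num) x
    simpa using this
  have hsum2 : Summable fun i => ‖x i‖ ^ (2:ℝ) := by
    refine Summable.of_nonneg_of_le (fun i => ?_) hpt (h.mul_right S)
    positivity
  have h2 : ‖x‖ ^ (2:ℝ) ≤ S * S := by
    rw [hnorm]
    calc ∑' i, ‖x i‖ ^ (2:ℝ) ≤ ∑' i, ‖x i‖ * S := Summable.tsum_le_tsum hpt hsum2 (h.mul_right S)
    _ = S * S := by rw [tsum_mul_right]
  have h2' : ‖x‖ ^ (2:ℕ) ≤ S ^ (2:ℕ) := by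
    have h3 : ‖x‖ ^ ((2:ℕ):ℝ) = ‖x‖ ^ (2:ℕ) := Real.rpow_natCast _ 2
    push_cast at h3
    rw [h3] at h2
    calc ‖x‖ ^ (2:ℕ) ≤ S * S := h2
    _ = S ^ (2:ℕ) := by ring
  exact (pow_le_pow_iff_left₀ (norm_nonneg _) hSnn (two_ne_zero)).mp h2'

lemma combine {w : L2} (hwfin : l1norm w ≠ ⊤) {t αn ηn : ℝ}
    (ht : 0 ≤ t) (hα : 0 ≤ αn) (hη : 0 ≤ ηn) :
    ENNReal.ofReal t + ENNReal.ofReal αn * l1norm w - ENNReal.ofReal (ηn * αn * ‖w‖)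
      = ENNReal.ofReal (t + αn * (l1norm w).toReal - ηn * αn * ‖w‖) := by
  rw [ENNReal.ofReal_sub _ (by positivity),
    ENNReal.ofReal_add ht (by positivity),
    ENNReal.ofReal_mul hα, ENNReal.ofReal_toReal hwfin]

set_option maxHeartbeats 2000000 in
lemma key {Y : Type*} [NormedAddCommGroup Y] [NormedSpace ℝ Y]
    (A : L2 →L[ℝ] Y) (q τ₁ τ₂ η : ℝ) (hq : 1 ≤ q) (hτ₁ : 1 < τ₁) (hτ : τ₁ ≤ τ₂)
    (y : Y) (xsol : L2) (hxsol : A xsol = y) (hxsolfin : l1norm xsol < ⊤)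
    (δ : ℕ → ℝ) (hδpos : ∀ n, 0 < δ n) (hδ : Tendsto δ atTop (nhds 0))
    (ynoise : ℕ → Y) (hnoise : ∀ n, ‖y - ynoise n‖ ≤ δ n)
    (α : ℕ → ℝ) (hα : ∀ n, 0 < α n)
    (ηs : ℕ → ℝ) (hηs : ∀ n, ηs n ∈ Set.Icc (0 : ℝ) 1)
    (hηlim : Tendsto ηs atTop (nhds η)) (hη : η ∈ Set.Ico (0 : ℝ) 1)
    (x : ℕ → L2)
    (hmin : ∀ n, ∀ z : L2,
      ENNReal.ofReal ((1 / q) * ‖A (x n) - ynoise n‖ ^ q) +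
          ENNReal.ofReal (α n) * l1norm (x n) -
          ENNReal.ofReal (ηs n * α n * ‖x n‖) ≤
        ENNReal.ofReal ((1 / q) * ‖A z - ynoise n‖ ^ q) +
          ENNReal.ofReal (α n) * l1norm z -
          ENNReal.ofReal (ηs n * α n * ‖z‖))
    (hdisc : ∀ n, τ₁ * δ n ≤ ‖A (x n) - ynoise n‖ ∧
      ‖A (x n) - ynoise n‖ ≤ τ₂ * δ n) :
    ∃ (φ : ℕ → ℕ) (xstar : L2), StrictMono φ ∧
      Tendsto (fun j => ‖x (φ j) - xstar‖) atTop (nhds 0) ∧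
      A xstar = y ∧ ∀ z : L2, A z = y → Reta η xstar ≤ Reta η z := by
  have hq0 : 0 < q := lt_of_lt_of_le one_pos hq
  have hqinv : 0 < 1 / q := by positivity
  -- Step F : finiteness of l1norm (x n)
  have hfin : ∀ n, l1norm (x n) ≠ ⊤ := by
    intro n htop
    have h := hmin n xsol
    have hL : ENNReal.ofReal ((1 / q) * ‖A (x n) - ynoise n‖ ^ q) +
        ENNReal.ofReal (α n) * l1norm (x n) -
        ENNReal.ofReal (ηs n * α n * ‖x n‖) = ⊤ := by
      rw [htop, ENNReal.mul_top (by simpa using (ENNReal.ofReal_pos.mpr (hα n)).ne'),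
        add_top _]
      rw [ENNReal.sub_eq_top_iff]
      exact ⟨rfl, ENNReal.ofReal_ne_top⟩
    rw [hL] at h
    have hR : ENNReal.ofReal ((1 / q) * ‖A xsol - ynoise n‖ ^ q) +
        ENNReal.ofReal (α n) * l1norm xsol -
        ENNReal.ofReal (ηs n * α n * ‖xsol‖) < ⊤ := by
      refine lt_of_le_of_lt (tsub_le_self) ?_
      exact ENNReal.add_lt_top.mpr ⟨ENNReal.ofReal_lt_top,
        ENNReal.mul_lt_top ENNReal.ofReal_lt_top hxsolfin⟩
    exact absurd (top_le_iff.mp h) (by simpa using hR.ne)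
  set a : ℕ → ℝ := fun n => (l1norm (x n)).toReal with ha
  have hsumm : ∀ n, Summable fun i => ‖x n i‖ := fun n => l1_summable (hfin n)
  have hatsum : ∀ n, a n = ∑' i, ‖x n i‖ := fun n => l1norm_toReal (hsumm n)
  have hanonneg : ∀ n, 0 ≤ a n := fun n => ENNReal.toReal_nonneg
  have hxnorm_le : ∀ n, ‖x n‖ ≤ a n := by
    intro n; rw [hatsum n]; exact norm_le_tsum _ (hsumm n)
  -- Step K : the basic comparison inequality
  have hK : ∀ n, ∀ z : L2, A z = y → l1norm z ≠ ⊤ →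
      a n - ηs n * ‖x n‖ ≤ (l1norm z).toReal - ηs n * ‖z‖ := by
    intro n z hz hzfin
    have hsz := l1_summable hzfin
    have hzn : ‖z‖ ≤ (l1norm z).toReal := by
      rw [l1norm_toReal hsz]; exact norm_le_tsum _ hsz
    obtain ⟨hη0, hη1⟩ := hηs n
    have ht1 : (0:ℝ) ≤ (1/q) * ‖A (x n) - ynoise n‖ ^ q := by positivity
    have ht2 : (0:ℝ) ≤ (1/q) * ‖A z - ynoise n‖ ^ q := by positivity
    have h := hmin n z
    rw [combine (hfin n) ht1 (hα n).le hη0, combine hzfin ht2 (hα n).le hη0] at h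
    have hU2 : (0:ℝ) ≤ (1/q) * ‖A z - ynoise n‖ ^ q + α n * (l1norm z).toReal
        - ηs n * α n * ‖z‖ := by
      nlinarith [mul_le_mul_of_nonneg_left hzn (hα n).le,
        mul_le_mul_of_nonneg_right hη1 (mul_nonneg (hα n).le (norm_nonneg (E := L2) z)),
        norm_nonneg (E := L2) z, ENNReal.toReal_nonneg (a := l1norm z)]
    have hreal := (ENNReal.ofReal_le_ofReal_iff hU2).mp h
    have hAz : ‖A z - ynoise n‖ ≤ ‖A (x n) - ynoise n‖ := by
      have h1 : A z - ynoise n = y - ynoise n := by rw [hz]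
      rw [h1]
      have h2 := hnoise n
      have h3 := (hdisc n).1
      nlinarith [hδpos n]
    have hpow : ‖A z - ynoise n‖ ^ q ≤ ‖A (x n) - ynoise n‖ ^ q :=
      Real.rpow_le_rpow (norm_nonneg _) hAz hq0.le
    have hfact : α n * (a n - ηs n * ‖x n‖)
        ≤ α n * ((l1norm z).toReal - ηs n * ‖z‖) := by
      nlinarith [mul_le_mul_of_nonneg_left hpow hqinv.le]
    exact (mul_le_mul_iff_right₀ (hα n)).mp hfact
  -- Step B : uniform bound on the ℓ¹ norms
  set η' : ℝ := (1 + η) / 2 with hη'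
  have hη'1 : η' < 1 := by rw [hη']; linarith [hη.2]
  have hη'0 : 0 ≤ η' := by rw [hη']; linarith [hη.1]
  have hηη' : η < η' := by rw [hη']; linarith [hη.2]
  have hev : ∀ᶠ n in atTop, ηs n < η' := hηlim.eventually_lt_const hηη'
  obtain ⟨N₀, hN₀⟩ := eventually_atTop.mp hev
  have hbound0 : ∀ n, N₀ ≤ n → a n ≤ max 0 ((l1norm xsol).toReal / (1 - η')) := by
    intro n hn
    have hKn := hK n xsol hxsol hxsolfin.ne
    have h1 : ηs n * ‖x n‖ ≤ η' * a n := by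
      have := (hηs n).1
      nlinarith [hxnorm_le n, (hN₀ n hn).le, norm_nonneg (E := L2) (x n), hanonneg n]
    have h2 : a n * (1 - η') ≤ (l1norm xsol).toReal := by
      have h3 : ηs n * ‖xsol‖ ≥ 0 :=
        mul_nonneg (hηs n).1 (norm_nonneg (E := L2) xsol)
      nlinarith
    have h4 : a n ≤ (l1norm xsol).toReal / (1 - η') := by
      rw [le_div_iff₀ (by linarith)]; linarith
    exact le_max_of_le_right h4
  set C : ℝ := max 0 ((l1norm xsol).toReal / (1 - η'))
      + ∑ m ∈ Finset.range N₀, a m with hC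
  have hCb : ∀ n, a n ≤ C := by
    intro n
    rcases lt_or_ge n N₀ with h | h
    · have h1 : a n ≤ ∑ m ∈ Finset.range N₀, a m :=
        Finset.single_le_sum (fun m _ => hanonneg m) (Finset.mem_range.mpr h)
      have : (0:ℝ) ≤ max 0 ((l1norm xsol).toReal / (1 - η')) := le_max_left _ _
      rw [hC]; linarith
    · have h1 := hbound0 n h
      have h2 : (0:ℝ) ≤ ∑ m ∈ Finset.range N₀, a m :=
        Finset.sum_nonneg fun m _ => hanonneg m
      rw [hC]; linarith
  have hC0 : 0 ≤ C := le_trans (hanonneg 0) (hCb 0)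
  -- Step E : extraction of a coordinatewise convergent subsequence
  have hmem : ∀ n, (fun i => x n i) ∈ Set.pi Set.univ (fun _ : ℕ => Set.Icc (-C) C) := by
    intro n i _
    have h2 : ‖x n i‖ ≤ C := le_trans (coord_le_norm (x n) i)
      (le_trans (hxnorm_le n) (hCb n))
    rw [Real.norm_eq_abs] at h2
    exact Set.mem_Icc.mpr (abs_le.mp h2)
  obtain ⟨f, _, φ, hφ, hconv⟩ :=
    (isCompact_univ_pi (fun _ : ℕ => isCompact_Icc)).tendsto_subseq hmem
  have hcoord : ∀ i, Tendsto (fun j => x (φ j) i) atTop (nhds (f i)) := by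
    intro i
    exact (tendsto_pi_nhds.mp hconv) i
  -- Step M : the limit lies in ℓ¹ ⊂ ℓ²
  have hpartial : ∀ (s : Finset ℕ) (j : ℕ), ∑ i ∈ s, ‖x (φ j) i‖ ≤ C := by
    intro s j
    refine le_trans (Summable.sum_le_tsum s (fun i _ => norm_nonneg _) (hsumm _)) ?_
    rw [← hatsum]; exact hCb _
  have hfsum_bound : ∀ s : Finset ℕ, ∑ i ∈ s, ‖f i‖ ≤ C := by
    intro s
    have h1 : Tendsto (fun j => ∑ i ∈ s, ‖x (φ j) i‖) atTop
        (nhds (∑ i ∈ s, ‖f i‖)) :=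
      tendsto_finset_sum s fun i _ => (hcoord i).norm
    exact le_of_tendsto h1 (Eventually.of_forall fun j => hpartial s j)
  have hfsumm : Summable fun i => ‖f i‖ :=
    summable_of_sum_range_le (fun i => norm_nonneg _)
      (fun m => hfsum_bound (Finset.range m))
  have hf2 : Memℓp f 2 := by
    have h1 : Memℓp f 1 := memℓp_gen (p := 1) (by simpa using hfsumm)
    exact h1.of_exponent_ge (by norm_num)
  refine ⟨φ, ⟨f, hf2⟩, hφ, ?_⟩
  set xstar : L2 := ⟨f, hf2⟩ with hxstar
  have hxsi : ∀ i, xstar i = f i := fun i => rfl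
  have hfsumm' : Summable fun i => ‖xstar i‖ := hfsumm
  have hxsfin : l1norm xstar ≠ ⊤ := l1norm_ne_top hfsumm'
  set rstar : ℝ := (l1norm xstar).toReal with hrs
  have hrstar : rstar = ∑' i, ‖f i‖ := l1norm_toReal hfsumm'
  have hrsC : rstar ≤ C := by
    rw [hrstar]
    exact Real.tsum_le_of_sum_range_le (fun i => norm_nonneg _)
      (fun m => hfsum_bound (Finset.range m))
  have hxstar_norm : ‖xstar‖ ≤ rstar := by
    rw [hrstar]; exact norm_le_tsum _ hfsumm'
  -- Step W : A xstar = y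
  have hAx : Tendsto (fun n => A (x n)) atTop (nhds y) := by
    rw [tendsto_iff_norm_sub_tendsto_zero]
    have hb : ∀ n, ‖A (x n) - y‖ ≤ (τ₂ + 1) * δ n := by
      intro n
      have h1 := (hdisc n).2
      have h2 := hnoise n
      calc ‖A (x n) - y‖ = ‖(A (x n) - ynoise n) + (ynoise n - y)‖ := by
            rw [sub_add_sub_cancel]
        _ ≤ ‖A (x n) - ynoise n‖ + ‖ynoise n - y‖ := norm_add_le _ _
        _ ≤ τ₂ * δ n + δ n := add_le_add h1 (by rwa [norm_sub_rev])
        _ = (τ₂ + 1) * δ n := by ring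
    have h0 : Tendsto (fun n => (τ₂ + 1) * δ n) atTop (nhds 0) := by
      simpa using hδ.const_mul (τ₂ + 1)
    exact squeeze_zero (fun n => norm_nonneg _) hb h0
  have hDb : ∀ j, ‖x (φ j) - xstar‖ ≤ 2 * C := by
    intro j
    calc ‖x (φ j) - xstar‖ ≤ ‖x (φ j)‖ + ‖xstar‖ := norm_sub_le _ _
      _ ≤ C + C := add_le_add (le_trans (hxnorm_le _) (hCb _))
          (le_trans hxstar_norm hrsC)
      _ = 2 * C := by ring
  have hweak : ∀ v : L2,
      Tendsto (fun j => (@inner ℝ L2 _ v (x (φ j) - xstar))) atTop (nhds 0) := by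
    intro v
    rw [Metric.tendsto_atTop]
    intro ε hε
    have hε' : 0 < ε / (2 * (2 * C + 1)) := by positivity
    have hv : Tendsto (fun m => ∑ i ∈ Finset.range m, lp.single 2 i (v i))
        atTop (nhds v) :=
      (lp.hasSum_single (by norm_num) v).tendsto_sum_nat
    obtain ⟨N, hN⟩ := (Metric.tendsto_atTop.mp hv) (ε / (2 * (2 * C + 1))) hε'
    set vm : L2 := ∑ i ∈ Finset.range N, lp.single 2 i (v i) with hvm
    have hvmd : ‖vm - v‖ < ε / (2 * (2 * C + 1)) := by
      have := hN N le_rfl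
      rwa [dist_eq_norm] at this
    have hfin2 : Tendsto (fun j => ∑ i ∈ Finset.range N, v i * (x (φ j) i - f i))
        atTop (nhds 0) := by
      have h1 : ∀ i, Tendsto (fun j => v i * (x (φ j) i - f i)) atTop (nhds 0) := by
        intro i
        have h2 : Tendsto (fun j => x (φ j) i - f i) atTop (nhds 0) := by
          simpa using (hcoord i).sub_const (f i)
        simpa using h2.const_mul (v i)
      simpa using tendsto_finset_sum (Finset.range N) (fun i _ => h1 i)
    obtain ⟨M, hM⟩ := (Metric.tendsto_atTop.mp hfin2) (ε / 2) (by positivity)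
    refine ⟨M, fun j hj => ?_⟩
    have hvmi : (@inner ℝ L2 _ vm (x (φ j) - xstar))
        = ∑ i ∈ Finset.range N, v i * (x (φ j) i - f i) := by
      rw [hvm, sum_inner]
      refine Finset.sum_congr rfl fun i _ => ?_
      rw [lp.inner_single_left]
      have hcoe : (x (φ j) - xstar) i = x (φ j) i - f i := by
        rw [lp.coeFn_sub]; rfl
      rw [hcoe]
      simp [mul_comm]
    have hsplit : (@inner ℝ L2 _ v (x (φ j) - xstar))
        = (@inner ℝ L2 _ vm (x (φ j) - xstar)) + (@inner ℝ L2 _ (v - vm) (x (φ j) - xstar)) := by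
      rw [← inner_add_left]
      congr 1
      abel
    have herr : |(@inner ℝ L2 _ (v - vm) (x (φ j) - xstar))| ≤ ε / 2 := by
      refine le_trans (abs_real_inner_le_norm _ _) ?_
      have h1 : ‖v - vm‖ ≤ ε / (2 * (2 * C + 1)) := by
        rw [norm_sub_rev]; exact hvmd.le
      have h2 := hDb j
      calc ‖v - vm‖ * ‖x (φ j) - xstar‖ ≤ (ε / (2 * (2 * C + 1))) * (2 * C + 1) := by
            apply mul_le_mul h1 (by linarith) (norm_nonneg _) (by positivity)
        _ ≤ ε / 2 := by
            rw [div_mul_eq_mul_div, mul_comm]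
            rw [div_le_div_iff₀ (by positivity) (by norm_num)]
            ring_nf
            nlinarith [hC0, hε]
    have hfinj := hM j hj
    rw [Real.dist_eq, sub_zero] at hfinj ⊢
    rw [hsplit, ← hvmi] at *
    calc |(@inner ℝ L2 _ vm (x (φ j) - xstar)) + (@inner ℝ L2 _ (v - vm) (x (φ j) - xstar))|
        ≤ |(@inner ℝ L2 _ vm (x (φ j) - xstar))| + |(@inner ℝ L2 _ (v - vm) (x (φ j) - xstar))| :=
          abs_add_le _ _
      _ < ε / 2 + ε / 2 := by
          apply add_lt_add_of_lt_of_le _ herr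
          rw [hvmi]; exact hfinj
      _ = ε := by ring
  have hAxstar : A xstar = y := by
    rw [NormedSpace.eq_iff_forall_dual_eq ℝ]
    intro g
    set T : L2 →L[ℝ] ℝ := g.comp A with hT
    set v : L2 := (InnerProductSpace.toDual ℝ L2).symm T with hv
    have hTv : ∀ u : L2, (@inner ℝ L2 _ v u : ℝ) = T u := fun u =>
      InnerProductSpace.toDual_symm_apply
    have h1 : Tendsto (fun j => T (x (φ j))) atTop (nhds (g y)) := by
      have h2 : Tendsto (fun j => A (x (φ j))) atTop (nhds y) :=
        hAx.comp hφ.tendsto_atTop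
      exact ((g.continuous.tendsto y).comp h2 : _)
    have h2 : Tendsto (fun j => T (x (φ j))) atTop (nhds (T xstar)) := by
      have h3 := hweak v
      have h4 : ∀ j, T (x (φ j))
          = (@inner ℝ L2 _ v (x (φ j) - xstar)) + T xstar := by
        intro j
        rw [inner_sub_right, hTv, hTv]; ring
      have h5 : Tendsto (fun j => (@inner ℝ L2 _ v (x (φ j) - xstar)) + T xstar)
          atTop (nhds (0 + T xstar)) := h3.add_const _
      rw [zero_add] at h5
      exact h5.congr fun j => (h4 j).symm
    have := tendsto_nhds_unique h2 h1
    exact this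
  -- Step BL : strong ℓ¹ convergence along the subsequence
  set eps : ℕ → ℝ := fun j => ∑' i, ‖x (φ j) i - f i‖ with hepsdef
  have hsd : ∀ j, Summable fun i => ‖x (φ j) i - f i‖ := by
    intro j
    refine Summable.of_nonneg_of_le (fun i => norm_nonneg _)
      (fun i => norm_sub_le _ _) ((hsumm (φ j)).add hfsumm)
  have heps0 : ∀ j, 0 ≤ eps j := fun j => tsum_nonneg fun i => norm_nonneg _
  have hnormle : ∀ j, ‖x (φ j) - xstar‖ ≤ eps j := by
    intro j
    have h1 : ∀ i, (x (φ j) - xstar) i = x (φ j) i - f i := by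
      intro i; rw [lp.coeFn_sub]; rfl
    have h2 : Summable fun i => ‖(x (φ j) - xstar) i‖ := by
      simpa only [h1] using hsd j
    refine le_trans (norm_le_tsum _ h2) ?_
    rw [hepsdef]
    exact le_of_eq (tsum_congr fun i => by rw [h1])
  have hKstar : ∀ n, a n - ηs n * ‖x n‖ ≤ rstar - ηs n * ‖xstar‖ :=
    fun n => hK n xstar hAxstar hxsfin
  have hepsto : Tendsto eps atTop (nhds 0) := by
    rw [Metric.tendsto_atTop]
    intro ε hε
    set θ : ℝ := ε * (1 - η') / 2 with hθ
    have hθ0 : 0 < θ := by rw [hθ]; nlinarith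
    obtain ⟨m, hm⟩ : ∃ m, ∑' i, ‖f (i + m)‖ < θ / 4 := by
      have h1 : Tendsto (fun m => ∑' i, ‖f (i + m)‖) atTop (nhds 0) :=
        tendsto_sum_nat_add (fun i => ‖f i‖)
      exact ((h1.eventually_lt_const (by linarith : (0:ℝ) < θ / 4)).exists)
    have htail0 : 0 ≤ ∑' i, ‖f (i + m)‖ := tsum_nonneg fun i => norm_nonneg _
    have hs1 : ∀ᶠ j in atTop,
        ∑ i ∈ Finset.range m, ‖x (φ j) i - f i‖ < θ / 4 := by
      have h1 : Tendsto (fun j => ∑ i ∈ Finset.range m, ‖x (φ j) i - f i‖)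
          atTop (nhds 0) := by
        have h2 : ∀ i, Tendsto (fun j => ‖x (φ j) i - f i‖) atTop (nhds 0) := by
          intro i
          have h3 : Tendsto (fun j => x (φ j) i - f i) atTop (nhds 0) := by
            simpa using (hcoord i).sub_const (f i)
          simpa using h3.norm
        simpa using tendsto_finset_sum (Finset.range m) (fun i _ => h2 i)
      exact h1.eventually_lt_const (by linarith)
    have hs2 : ∀ᶠ j in atTop,
        |∑ i ∈ Finset.range m, ‖x (φ j) i‖ - ∑ i ∈ Finset.range m, ‖f i‖| < θ / 4 := by
      have h1 : Tendsto (fun j => ∑ i ∈ Finset.range m, ‖x (φ j) i‖)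
          atTop (nhds (∑ i ∈ Finset.range m, ‖f i‖)) :=
        tendsto_finset_sum (Finset.range m) (fun i _ => (hcoord i).norm)
      have h2 := (Metric.tendsto_atTop.mp h1) (θ / 4) (by linarith)
      obtain ⟨M, hM⟩ := h2
      rw [eventually_atTop]
      exact ⟨M, fun j hj => by have := hM j hj; rwa [Real.dist_eq] at this⟩
    have hs3 : ∀ᶠ j in atTop, ηs (φ j) < η' :=
      hφ.tendsto_atTop.eventually hev
    rw [← eventually_atTop]
    filter_upwards [hs1, hs2, hs3] with j h1 h2 h3
    -- split the sums
    have hsplit1 : a (φ j) = ∑ i ∈ Finset.range m, ‖x (φ j) i‖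
        + ∑' i, ‖x (φ j) (i + m)‖ := by
      rw [hatsum]; exact (Summable.sum_add_tsum_nat_add m (hsumm (φ j))).symm
    have hsplit2 : eps j = ∑ i ∈ Finset.range m, ‖x (φ j) i - f i‖
        + ∑' i, ‖x (φ j) (i + m) - f (i + m)‖ := by
      rw [hepsdef]; exact (Summable.sum_add_tsum_nat_add m (hsd j)).symm
    have hsplit3 : rstar = ∑ i ∈ Finset.range m, ‖f i‖ + ∑' i, ‖f (i + m)‖ := by
      rw [hrstar]; exact (Summable.sum_add_tsum_nat_add m hfsumm).symm
    have htails : ∑' i, ‖x (φ j) (i + m) - f (i + m)‖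
        ≤ ∑' i, ‖x (φ j) (i + m)‖ + ∑' i, ‖f (i + m)‖ := by
      have hsa : Summable fun i => ‖x (φ j) (i + m)‖ :=
        (summable_nat_add_iff m).mpr (hsumm (φ j))
      have hsb : Summable fun i => ‖f (i + m)‖ :=
        (summable_nat_add_iff m).mpr hfsumm
      have hsc : Summable fun i => ‖x (φ j) (i + m) - f (i + m)‖ :=
        (summable_nat_add_iff m).mpr (hsd j)
      calc ∑' i, ‖x (φ j) (i + m) - f (i + m)‖
          ≤ ∑' i, (‖x (φ j) (i + m)‖ + ‖f (i + m)‖) :=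
            Summable.tsum_le_tsum (fun i => norm_sub_le _ _) hsc (hsa.add hsb)
        _ = ∑' i, ‖x (φ j) (i + m)‖ + ∑' i, ‖f (i + m)‖ := Summable.tsum_add hsa hsb
    -- lower bound : a (φ j) ≥ rstar + eps j - θ
    have hBL : rstar + eps j - θ ≤ a (φ j) := by
      rw [hsplit1, hsplit2, hsplit3]
      have habs := abs_lt.mp h2
      linarith [hm, htails, habs.1, habs.2]
    -- upper bound from minimality
    have hKj := hKstar (φ j)
    have hnd : ‖x (φ j)‖ - ‖xstar‖ ≤ eps j :=
      le_trans (norm_sub_norm_le _ _) (hnormle j)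
    have hup : a (φ j) ≤ rstar + η' * eps j := by
      have hη0j := (hηs (φ j)).1
      nlinarith [mul_le_mul_of_nonneg_left hnd hη0j,
        mul_le_mul_of_nonneg_right h3.le (heps0 j)]
    have hepsle : eps j ≤ ε / 2 := by nlinarith
    rw [Real.dist_eq, sub_zero, abs_of_nonneg (heps0 j)]
    linarith
  -- conclusion pieces
  have hstrong : Tendsto (fun j => ‖x (φ j) - xstar‖) atTop (nhds 0) :=
    squeeze_zero (fun j => norm_nonneg _) hnormle hepsto
  refine ⟨hstrong, hAxstar, ?_⟩
  -- minimality of xstar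
  have hato : Tendsto (fun j => a (φ j)) atTop (nhds rstar) := by
    have hub : ∀ j, a (φ j) ≤ rstar + eps j := by
      intro j
      rw [hatsum, hrstar, hepsdef]
      calc ∑' i, ‖x (φ j) i‖ ≤ ∑' i, (‖x (φ j) i - f i‖ + ‖f i‖) := by
            refine Summable.tsum_le_tsum (fun i => ?_) (hsumm (φ j)) ((hsd j).add hfsumm)
            calc ‖x (φ j) i‖ = ‖(x (φ j) i - f i) + f i‖ := by ring_nf
              _ ≤ ‖x (φ j) i - f i‖ + ‖f i‖ := norm_add_le _ _
        _ = ∑' i, ‖x (φ j) i - f i‖ + ∑' i, ‖f i‖ := Summable.tsum_add (hsd j) hfsumm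
        _ = (∑' i, ‖f i‖) + ∑' i, ‖x (φ j) i - f i‖ := by ring
    have hlb : ∀ j, rstar - eps j ≤ a (φ j) := by
      intro j
      rw [hatsum, hrstar, hepsdef]
      have h1 : ∑' i, ‖f i‖ ≤ ∑' i, ‖x (φ j) i - f i‖ + ∑' i, ‖x (φ j) i‖ := by
        calc ∑' i, ‖f i‖ ≤ ∑' i, (‖x (φ j) i - f i‖ + ‖x (φ j) i‖) := by
              refine Summable.tsum_le_tsum (fun i => ?_) hfsumm ((hsd j).add (hsumm (φ j)))
              calc ‖f i‖ = ‖(x (φ j) i - f i) - (x (φ j) i - f i - f i) - f i + f i‖ := by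
                    ring_nf
                _ = ‖(f i - x (φ j) i) + x (φ j) i‖ := by ring_nf
                _ ≤ ‖f i - x (φ j) i‖ + ‖x (φ j) i‖ := norm_add_le _ _
                _ = ‖x (φ j) i - f i‖ + ‖x (φ j) i‖ := by rw [norm_sub_rev]
          _ = ∑' i, ‖x (φ j) i - f i‖ + ∑' i, ‖x (φ j) i‖ := Summable.tsum_add (hsd j) (hsumm (φ j))
      linarith
    have hl : Tendsto (fun j => rstar - eps j) atTop (nhds rstar) := by
      simpa using (tendsto_const_nhds (x := rstar) (f := atTop)).sub hepsto
    have hu : Tendsto (fun j => rstar + eps j) atTop (nhds rstar) := by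
      simpa using (tendsto_const_nhds (x := rstar) (f := atTop)).add hepsto
    exact tendsto_of_tendsto_of_tendsto_of_le_of_le hl hu hlb hub
  have hxto : Tendsto (fun j => x (φ j)) atTop (nhds xstar) :=
    tendsto_iff_norm_sub_tendsto_zero.mpr hstrong
  have hnto : Tendsto (fun j => ‖x (φ j)‖) atTop (nhds ‖xstar‖) := hxto.norm
  have hηφ : Tendsto (fun j => ηs (φ j)) atTop (nhds η) :=
    hηlim.comp hφ.tendsto_atTop
  intro z hz
  by_cases hzf : l1norm z = ⊤
  · have h1 : Reta η z = ⊤ := by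
      rw [Reta, hzf, ENNReal.sub_eq_top_iff]
      exact ⟨rfl, ENNReal.ofReal_ne_top⟩
    rw [h1]; exact le_top
  · have hKz : ∀ j, a (φ j) - ηs (φ j) * ‖x (φ j)‖
        ≤ (l1norm z).toReal - ηs (φ j) * ‖z‖ := fun j => hK (φ j) z hz hzf
    have hL : Tendsto (fun j => a (φ j) - ηs (φ j) * ‖x (φ j)‖) atTop
        (nhds (rstar - η * ‖xstar‖)) := hato.sub (hηφ.mul hnto)
    have hR : Tendsto (fun j => (l1norm z).toReal - ηs (φ j) * ‖z‖) atTop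
        (nhds ((l1norm z).toReal - η * ‖z‖)) :=
      tendsto_const_nhds.sub (hηφ.mul tendsto_const_nhds)
    have hfinal2 : rstar - η * ‖xstar‖ ≤ (l1norm z).toReal - η * ‖z‖ :=
      le_of_tendsto_of_tendsto' hL hR hKz
    rw [Reta, Reta, ← ENNReal.ofReal_toReal hxsfin, ← ENNReal.ofReal_toReal hzf,
      ← ENNReal.ofReal_sub _ (mul_nonneg hη.1 (norm_nonneg _)),
      ← ENNReal.ofReal_sub _ (mul_nonneg hη.1 (norm_nonneg _))]
    exact ENNReal.ofReal_le_ofReal hfinal2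


/-- convergence of `α‖·‖₁ − β‖·‖₂` regularization under
Morozov's discrepancy principle: if `δₙ → 0`, `‖y − yₙ‖ ≤ δₙ`, `ηₙ → η < 1`,
`xₙ` minimizes `x ↦ (1/q)‖Ax − yₙ‖^q + αₙ‖x‖₁ − ηₙαₙ‖x‖₂` and
`τ₁δₙ ≤ ‖Axₙ − yₙ‖ ≤ τ₂δₙ`, then `(xₙ)` has a subsequence converging in
`ℓ²`-norm to an `R_η`-minimum solution of `Ax = y`; if the `R_η`-minimum
solution `x†` is unique, the whole sequence converges to it. -/
theorem stmt19 {Y : Type*} [NormedAddCommGroup Y] [NormedSpace ℝ Y]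
    (A : L2 →L[ℝ] Y) (q τ₁ τ₂ η : ℝ) (hq : 1 ≤ q) (hτ₁ : 1 < τ₁) (hτ : τ₁ ≤ τ₂)
    (y : Y) (xsol : L2) (hxsol : A xsol = y) (hxsolfin : l1norm xsol < ⊤)
    (δ : ℕ → ℝ) (hδpos : ∀ n, 0 < δ n) (hδ : Tendsto δ atTop (nhds 0))
    (ynoise : ℕ → Y) (hnoise : ∀ n, ‖y - ynoise n‖ ≤ δ n)
    (α : ℕ → ℝ) (hα : ∀ n, 0 < α n)
    (ηs : ℕ → ℝ) (hηs : ∀ n, ηs n ∈ Set.Icc (0 : ℝ) 1)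
    (hηlim : Tendsto ηs atTop (nhds η)) (hη : η ∈ Set.Ico (0 : ℝ) 1)
    (x : ℕ → L2)
    (hmin : ∀ n, ∀ z : L2,
      ENNReal.ofReal ((1 / q) * ‖A (x n) - ynoise n‖ ^ q) +
          ENNReal.ofReal (α n) * l1norm (x n) -
          ENNReal.ofReal (ηs n * α n * ‖x n‖) ≤
        ENNReal.ofReal ((1 / q) * ‖A z - ynoise n‖ ^ q) +
          ENNReal.ofReal (α n) * l1norm z -
          ENNReal.ofReal (ηs n * α n * ‖z‖))
    (hdisc : ∀ n, τ₁ * δ n ≤ ‖A (x n) - ynoise n‖ ∧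
      ‖A (x n) - ynoise n‖ ≤ τ₂ * δ n) :
    (∃ (φ : ℕ → ℕ) (xstar : L2), StrictMono φ ∧
      Tendsto (fun j => ‖x (φ j) - xstar‖) atTop (nhds 0) ∧
      A xstar = y ∧ ∀ z : L2, A z = y → Reta η xstar ≤ Reta η z) ∧
    (∀ xdag : L2, A xdag = y → (∀ z : L2, A z = y → Reta η xdag ≤ Reta η z) →
      (∀ z : L2, A z = y → (∀ w : L2, A w = y → Reta η z ≤ Reta η w) → z = xdag) →
      Tendsto (fun n => ‖x n - xdag‖) atTop (nhds 0)) := by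
  constructor
  · exact key A q τ₁ τ₂ η hq hτ₁ hτ y xsol hxsol hxsolfin δ hδpos hδ ynoise hnoise
      α hα ηs hηs hηlim hη x hmin hdisc
  · intro xdag hdsol hdmin huniq
    by_contra hnot
    have hchar : ¬ ∀ ε > (0:ℝ), ∀ᶠ n in atTop, ‖x n - xdag‖ < ε := by
      intro hh
      apply hnot
      rw [Metric.tendsto_atTop]
      intro ε hε
      obtain ⟨N, hN⟩ := eventually_atTop.mp (hh ε hε)
      refine ⟨N, fun n hn => ?_⟩
      rw [Real.dist_eq, sub_zero, abs_of_nonneg (norm_nonneg _)]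
      exact hN n hn
    push_neg at hchar
    obtain ⟨ε, hε, hfreq⟩ := hchar
    simp only [← not_lt] at hfreq
    obtain ⟨ψ, hψ, hψp⟩ := extraction_of_frequently_atTop hfreq
    obtain ⟨φ, xstar, hφ, hconv, hsol, hminx⟩ := key A q τ₁ τ₂ η hq hτ₁ hτ y xsol
      hxsol hxsolfin
      (fun n => δ (ψ n)) (fun n => hδpos _) (hδ.comp hψ.tendsto_atTop)
      (fun n => ynoise (ψ n)) (fun n => hnoise _)
      (fun n => α (ψ n)) (fun n => hα _)
      (fun n => ηs (ψ n)) (fun n => hηs _) (hηlim.comp hψ.tendsto_atTop) hη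
      (fun n => x (ψ n)) (fun n z => hmin (ψ n) z) (fun n => hdisc (ψ n))
    have hxd : xstar = xdag := huniq xstar hsol hminx
    rw [hxd] at hconv
    obtain ⟨j, hj⟩ := (hconv.eventually_lt_const hε).exists
    exact hψp (φ j) hj
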